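/- The null space of the nonlocal Dirichlet operator is trivial: if u ∈ V_D satisfies Ku(x) = 0 for a.e. x ∈ Ω, then u = 0 a.e. on ℝ. -/

import Mathlib

open MeasureTheory Set Real

/-- The nonlocal operator `Ku(x) = ∫_ℝ (u(y) − u(x)) γ(x − y) dy`. -/
noncomputable def Knl (γ u : ℝ → ℝ) (x : ℝ) : ℝ := ∫ y, (u y - u x) * γ (x - y)

/-- The bilinear form
`B_D[u, φ] = (1/2) ∫_ℝ ∫_ℝ (u(y) − u(x)) γ(x − y) (φ(y) − φ(x)) dy dx`. -/
noncomputable def BD (γ u φ : ℝ → ℝ) : ℝ :=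
  (1 / 2) * ∫ x, ∫ y, (u y - u x) * γ (x - y) * (φ y - φ x)

/-- Membership in `V_D`: `u ∈ L²(ℝ)` and `u = 0` a.e. outside `Ω = [−L, L]`. -/
def MemVD (L : ℝ) (u : ℝ → ℝ) : Prop :=
  MemLp u 2 ∧ ∀ᵐ x : ℝ, x ∉ Icc (-L) L → u x = 0

/-- The `L²` norm of `u` on a set `s`, `‖u‖_{L²(s)} = (∫_s u²)^{1/2}`. -/
noncomputable def l2normOn (s : Set ℝ) (u : ℝ → ℝ) : ℝ := Real.sqrt (∫ x in s, u x ^ 2)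


/-!
On `Ω`, `Ku = 0` says `(γ ∗ u)(x) = (∫ γ) u(x)`, hence `(∫ γ) |u| ≤ γ ∗ |u|` there; off `Ω` this
holds trivially because `u = 0`. Both sides have the finite integral `(∫ γ)(∫ |u|)`, so equality
holds a.e. At a point `x₀ ∉ Ω` where it holds, `∫ |u(y)| γ(x₀ - y) dy = 0`, and `γ > 0` forces
`u = 0` a.e.
-/

open scoped ENNReal

namespace MeasureTheory

variable {G : Type*} [MeasurableSpace G] [AddGroup G] [MeasurableAdd₂ G] [MeasurableNeg G]
  {μ : Measure G} [μ.IsAddLeftInvariant] [SFinite μ] {f g : G → ℝ≥0∞}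

theorem lintegral_lconvolution (hf : AEMeasurable f μ) (hg : AEMeasurable g μ) :
    ∫⁻ x, (f ⋆ₗ[μ] g) x ∂μ = (∫⁻ x, f x ∂μ) * ∫⁻ x, g x ∂μ := by
  simp only [lconvolution_def]
  rw [lintegral_lintegral_swap (by fun_prop), ← lintegral_mul_const'' _ hf]
  refine lintegral_congr fun y => ?_
  rw [lintegral_add_left_eq_self (fun z => f y * g z), lintegral_const_mul'' _ hg]

theorem ae_lintegral_mul_eq_lconvolution_of_ae_le (hf : AEMeasurable f μ) (hg : AEMeasurable g μ)
    (hf_fin : ∫⁻ x, f x ∂μ ≠ ∞) (hg_fin : ∫⁻ x, g x ∂μ ≠ ∞)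
    (hle : ∀ᵐ x ∂μ, (∫⁻ x, g x ∂μ) * f x ≤ (f ⋆ₗ[μ] g) x) :
    ∀ᵐ x ∂μ, (∫⁻ x, g x ∂μ) * f x = (f ⋆ₗ[μ] g) x := by
  refine ae_eq_of_ae_le_of_lintegral_le hle ?_ (aemeasurable_lconvolution hf hg) ?_
  · rw [lintegral_const_mul'' _ hf]
    exact ENNReal.mul_ne_top hg_fin hf_fin
  · rw [lintegral_lconvolution hf hg, lintegral_const_mul'' _ hf, mul_comm]

theorem ae_eq_zero_of_lconvolution_eq_zero (hf : AEMeasurable f μ) (hg : AEMeasurable g μ)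
    (hg_pos : ∀ x, g x ≠ 0) {x₀ : G} (h : (f ⋆ₗ[μ] g) x₀ = 0) : f =ᵐ[μ] 0 := by
  have hg' : AEMeasurable (fun y => g (-y + x₀)) μ := hg.comp_quasiMeasurePreserving
    ((quasiMeasurePreserving_add_right μ x₀).comp (quasiMeasurePreserving_neg μ))
  rw [lconvolution_def] at h
  filter_upwards [(lintegral_eq_zero_iff' (hf.mul hg')).mp h] with y hy
  exact (mul_eq_zero.mp hy).resolve_right (hg_pos _)

end MeasureTheory

theorem integrable_mul_comp_sub_of_memLp_two {u γ : ℝ → ℝ} (hu : MemLp u 2) (hγ : MemLp γ 2)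
    (x : ℝ) : Integrable fun y => u y * γ (x - y) :=
  hu.integrable_mul (hγ.comp_measurePreserving (Measure.measurePreserving_sub_left volume x))

theorem Knl_eq_sub_mul_integral {γ u : ℝ → ℝ} {x : ℝ} (hγ : Integrable γ)
    (hu : Integrable fun y => u y * γ (x - y)) :
    Knl γ u x = (∫ y, u y * γ (x - y)) - u x * ∫ z, γ z := by
  simp_rw [Knl, sub_mul]
  rw [integral_sub hu ((hγ.comp_sub_left x).const_mul (u x)), integral_const_mul,
    integral_sub_left_eq_self]

theorem lintegral_enorm_mul_le_lconvolution_of_Knl_eq_zero {γ u : ℝ → ℝ} {x : ℝ} (hγ_nonneg : 0 ≤ γ)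
    (hγ : Integrable γ) (hu : Integrable fun y => u y * γ (x - y)) (hK : Knl γ u x = 0) :
    (∫⁻ z, ‖γ z‖ₑ) * ‖u x‖ₑ ≤ ((fun y => ‖u y‖ₑ) ⋆ₗ fun z => ‖γ z‖ₑ) x := by
  have hconv : ∫ y, u y * γ (x - y) = u x * ∫ z, γ z := by
    rw [Knl_eq_sub_mul_integral hγ hu] at hK
    linarith
  have hmass : ‖∫ z, γ z‖ₑ = ∫⁻ z, ‖γ z‖ₑ := by
    rw [Real.enorm_of_nonneg (integral_nonneg hγ_nonneg),
      ofReal_integral_eq_lintegral_ofReal hγ (.of_forall hγ_nonneg),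
      lintegral_enorm_of_nonneg hγ_nonneg]
  calc (∫⁻ z, ‖γ z‖ₑ) * ‖u x‖ₑ = ‖∫ y, u y * γ (x - y)‖ₑ := by
        rw [hconv, enorm_mul, hmass, mul_comm]
    _ ≤ ∫⁻ y, ‖u y * γ (x - y)‖ₑ := enorm_integral_le_lintegral_enorm _
    _ = _ := by simp only [lconvolution_def, enorm_mul, neg_add_eq_sub]

theorem MemVD.integrable {L : ℝ} {u : ℝ → ℝ} (hu : MemVD L u) : Integrable u :=
  IntegrableOn.integrable_of_ae_notMem_eq_zero ((hu.1.restrict _).integrable (by norm_num)) hu.2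

theorem K_nullspace_trivial_general (L : ℝ) (γ : ℝ → ℝ)
    (hγpos : ∀ z, 0 < γ z)
    (hγL1 : Integrable γ) (hγL2 : MemLp γ 2)
    (u : ℝ → ℝ) (hu : MemVD L u)
    (hK : ∀ᵐ x ∂volume.restrict (Icc (-L) L), Knl γ u x = 0) :
    ∀ᵐ x : ℝ, u x = 0 := by
  set f : ℝ → ℝ≥0∞ := fun y => ‖u y‖ₑ
  set g : ℝ → ℝ≥0∞ := fun z => ‖γ z‖ₑ
  have hf : AEMeasurable f := hu.1.1.enorm
  have hg : AEMeasurable g := hγL1.1.enorm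
  have hle : ∀ᵐ x, (∫⁻ z, g z) * f x ≤ (f ⋆ₗ g) x := by
    filter_upwards [ae_imp_of_ae_restrict hK, hu.2] with x hKx hx0
    by_cases hx : x ∈ Icc (-L) L
    · exact lintegral_enorm_mul_le_lconvolution_of_Knl_eq_zero (fun z => (hγpos z).le) hγL1
        (integrable_mul_comp_sub_of_memLp_two hu.1 hγL2 x) (hKx hx)
    · simp [f, hx0 hx]
  have heq := ae_lintegral_mul_eq_lconvolution_of_ae_le hf hg hu.integrable.2.ne hγL1.2.ne hle
  have : (ae (volume.restrict (Ioi L))).NeBot :=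
    ae_neBot.mpr (by simp [Measure.restrict_eq_zero])
  obtain ⟨x₀, hx₀, hux₀, hx₀eq⟩ :=
    ((ae_restrict_mem (measurableSet_Ioi (a := L))).and (ae_restrict_of_ae (hu.2.and heq))).exists
  have hu₀ : u x₀ = 0 := hux₀ fun h => (not_le.mpr hx₀) h.2
  have hf0 : f =ᵐ[volume] 0 := ae_eq_zero_of_lconvolution_eq_zero hf hg
    (fun z => by simpa [g] using (hγpos z).ne') (x₀ := x₀) (by simp [← hx₀eq, f, hu₀])
  filter_upwards [hf0] with x hx
  simpa [f] using hx

/-- Triviality of the null space of `K` on `V_D`: if `u ∈ V_D` and `Ku = 0` a.e. on `Ω`,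
then `u = 0` a.e. on `ℝ`. -/
theorem K_nullspace_trivial (L : ℝ) (hL : 0 < L) (γ : ℝ → ℝ)
    (hγeven : ∀ z, γ (-z) = γ z) (hγpos : ∀ z, 0 < γ z)
    (hγL1 : Integrable γ) (hγL2 : MemLp γ 2)
    (hγmom : Integrable (fun z => z ^ 2 * γ z))
    (u : ℝ → ℝ) (hu : MemVD L u)
    (hK : ∀ᵐ x ∂volume.restrict (Icc (-L) L), Knl γ u x = 0) :
    ∀ᵐ x : ℝ, u x = 0 :=
  K_nullspace_trivial_general L γ hγpos hγL1 hγL2 u hu hK
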